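/- Let M be a principal S¹-bundle over a 2n-dimensional closed base B with connection form α, bundle map π, and let ω₁,…,ω_{p+1} be invariant 1-forms with ωᵢ = π*(ηᵢ) + π*(φᵢ)·α generating a contact p-sphere. Then for any normalized (λ₁,…,λ_{p+1}), the function Σλᵢφᵢ and the 1-form Σλᵢ dφᵢ do not vanish simultaneously at any point of B. -/

import Mathlib

open scoped BigOperators

noncomputable section

/-- Exterior derivative of a 1-form (given as a plain function, linear at each
point) on a normed space, evaluated at `x` on `u, v`. -/
def extd {F : Type*} [NormedAddCommGroup F] [NormedSpace ℝ F]
    (ω : F → F → ℝ) (x u v : F) : ℝ :=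
  fderiv ℝ (fun y => ω y v) x u - fderiv ℝ (fun y => ω y u) x v

/-- Evaluation of `a ∧ b^n` on `2n+1` tangent vectors. -/
def wedgeEval {F : Type*} (n : ℕ) (a : F → ℝ) (b : F → F → ℝ)
    (v : Fin (2 * n + 1) → F) : ℝ :=
  ∑ σ : Equiv.Perm (Fin (2 * n + 1)),
    ((Equiv.Perm.sign σ : ℤ) : ℝ) * a (v (σ 0)) *
      ∏ i : Fin n,
        b (v (σ ⟨2 * (i : ℕ) + 1, by have := i.isLt; omega⟩))
          (v (σ ⟨2 * (i : ℕ) + 2, by have := i.isLt; omega⟩))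

/-- The invariant 1-form `ω = π*(η) + π*(φ)·α` on the (local model of the)
principal S¹-bundle `M = B × S¹` over `B = ℝ^{2n}` with connection form
`α = dt + π*(a)`. -/
def invForm {n : ℕ} (η : (Fin (2 * n) → ℝ) → (Fin (2 * n) → ℝ) →L[ℝ] ℝ)
    (φ : (Fin (2 * n) → ℝ) → ℝ) (a : (Fin (2 * n) → ℝ) → (Fin (2 * n) → ℝ) →L[ℝ] ℝ)
    (q : (Fin (2 * n) → ℝ) × ℝ) (w : (Fin (2 * n) → ℝ) × ℝ) : ℝ :=
  η q.1 w.1 + φ q.1 * (w.2 + a q.1 w.1)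

/-! ### Auxiliary material -/

/-- The base space `ℝ^{2n}`. -/
abbrev EE (n : ℕ) := Fin (2 * n) → ℝ

def idx1 (n : ℕ) (i : Fin n) : Fin (2 * n + 1) := ⟨2 * (i : ℕ) + 1, by have := i.isLt; omega⟩
def idx2 (n : ℕ) (i : Fin n) : Fin (2 * n + 1) := ⟨2 * (i : ℕ) + 2, by have := i.isLt; omega⟩

lemma slot_linear (n : ℕ) (A : EE n →L[ℝ] ℝ) (Bb : EE n →L[ℝ] EE n →L[ℝ] ℝ)
    [DecidableEq (Fin (2 * n + 1))]
    (u : Fin (2 * n + 1) → EE n) (j : Fin (2 * n + 1)) :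
    ∃ L : EE n →L[ℝ] ℝ, ∀ z,
      A (Function.update u j z 0) *
        ∏ i, Bb (Function.update u j z (idx1 n i)) (Function.update u j z (idx2 n i)) = L z := by
  have hj := j.isLt
  have tri : j = 0 ∨ (∃ i : Fin n, j = idx1 n i) ∨ (∃ i : Fin n, j = idx2 n i) := by
    by_cases h0 : (j : ℕ) = 0
    · exact Or.inl (Fin.ext h0)
    · rcases Nat.even_or_odd (j : ℕ) with ⟨k, hk⟩ | ⟨k, hk⟩
      · exact Or.inr (Or.inr ⟨⟨k - 1, by omega⟩, Fin.ext (by simp [idx2]; omega)⟩)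
      · exact Or.inr (Or.inl ⟨⟨k, by omega⟩, Fin.ext (by simp [idx1]; omega)⟩)
  rcases tri with rfl | ⟨i₀, rfl⟩ | ⟨i₀, rfl⟩
  · refine ⟨(∏ i, Bb (u (idx1 n i)) (u (idx2 n i))) • A, fun z => ?_⟩
    have h1 : ∀ i, Function.update u 0 z (idx1 n i) = u (idx1 n i) := fun i =>
      Function.update_of_ne (by simp [idx1, Fin.ext_iff]) _ _
    have h2 : ∀ i, Function.update u 0 z (idx2 n i) = u (idx2 n i) := fun i =>
      Function.update_of_ne (by simp [idx2, Fin.ext_iff]) _ _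
    simp only [h1, h2, Function.update_self, ContinuousLinearMap.smul_apply, smul_eq_mul]
    ring
  · refine ⟨(A (u 0) * ∏ i ∈ Finset.univ.erase i₀, Bb (u (idx1 n i)) (u (idx2 n i))) •
      (Bb.flip (u (idx2 n i₀))), fun z => ?_⟩
    have h0 : Function.update u (idx1 n i₀) z 0 = u 0 :=
      Function.update_of_ne (by simp [idx1, Fin.ext_iff]) _ _
    have hsplit : ∏ i, Bb (Function.update u (idx1 n i₀) z (idx1 n i))
        (Function.update u (idx1 n i₀) z (idx2 n i))
        = Bb z (u (idx2 n i₀)) * ∏ i ∈ Finset.univ.erase i₀,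
            Bb (u (idx1 n i)) (u (idx2 n i)) := by
      rw [← Finset.mul_prod_erase Finset.univ _ (Finset.mem_univ i₀)]
      congr 1
      · rw [Function.update_self,
          Function.update_of_ne (by simp [idx1, idx2, Fin.ext_iff]) _ _]
      · refine Finset.prod_congr rfl fun i hi => ?_
        have hne : i ≠ i₀ := (Finset.mem_erase.mp hi).1
        rw [Function.update_of_ne (by simp [idx1, Fin.ext_iff]; omega) _ _,
          Function.update_of_ne (by simp [idx1, idx2, Fin.ext_iff]; omega) _ _]
    rw [h0, hsplit]
    simp only [ContinuousLinearMap.smul_apply, ContinuousLinearMap.flip_apply, smul_eq_mul]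
    ring
  · refine ⟨(A (u 0) * ∏ i ∈ Finset.univ.erase i₀, Bb (u (idx1 n i)) (u (idx2 n i))) •
      (Bb (u (idx1 n i₀))), fun z => ?_⟩
    have h0 : Function.update u (idx2 n i₀) z 0 = u 0 :=
      Function.update_of_ne (by simp [idx2, Fin.ext_iff]) _ _
    have hsplit : ∏ i, Bb (Function.update u (idx2 n i₀) z (idx1 n i))
        (Function.update u (idx2 n i₀) z (idx2 n i))
        = Bb (u (idx1 n i₀)) z * ∏ i ∈ Finset.univ.erase i₀,
            Bb (u (idx1 n i)) (u (idx2 n i)) := by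
      rw [← Finset.mul_prod_erase Finset.univ _ (Finset.mem_univ i₀)]
      congr 1
      · rw [Function.update_self,
          Function.update_of_ne (by simp [idx1, idx2, Fin.ext_iff]) _ _]
      · refine Finset.prod_congr rfl fun i hi => ?_
        have hne : i ≠ i₀ := (Finset.mem_erase.mp hi).1
        rw [Function.update_of_ne (by simp [idx1, idx2, Fin.ext_iff]; omega) _ _,
          Function.update_of_ne (by simp [idx2, Fin.ext_iff]; omega) _ _]
    rw [h0, hsplit]
    simp only [ContinuousLinearMap.smul_apply, smul_eq_mul]
    ring

/-- The multilinear map `u ↦ A(u 0) * ∏ B(u(2i+1), u(2i+2))`. -/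
def prodML (n : ℕ) (A : EE n →L[ℝ] ℝ) (Bb : EE n →L[ℝ] EE n →L[ℝ] ℝ) :
    MultilinearMap ℝ (fun _ : Fin (2 * n + 1) => EE n) ℝ where
  toFun u := A (u 0) * ∏ i, Bb (u (idx1 n i)) (u (idx2 n i))
  map_update_add' := by
    intro inst u j x y
    obtain ⟨L, hL⟩ := slot_linear n A Bb u j
    rw [hL, hL, hL, map_add]
  map_update_smul' := by
    intro inst u j c x
    obtain ⟨L, hL⟩ := slot_linear n A Bb u j
    rw [hL, hL, map_smul]

lemma wedgeEval_pullback_eq_zero (n : ℕ) (A : EE n →L[ℝ] ℝ)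
    (Bb : EE n →L[ℝ] EE n →L[ℝ] ℝ) (v : Fin (2 * n + 1) → EE n × ℝ) :
    wedgeEval n (fun w => A w.1) (fun u w => Bb u.1 w.1) v = 0 := by
  classical
  have hdep : ¬ LinearIndependent ℝ (fun k => (v k).1) := by
    intro h
    have hcard := h.fintype_card_le_finrank
    simp only [Module.finrank_fintype_fun_eq_card, Fintype.card_fin] at hcard
    omega
  have hzero : (MultilinearMap.alternatization (prodML n A Bb)) (fun k => (v k).1) = 0 :=
    AlternatingMap.map_linearDependent _ _ hdep
  rw [MultilinearMap.alternatization_apply] at hzero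
  rw [wedgeEval, ← hzero]
  refine Finset.sum_congr rfl fun σ _ => ?_
  simp only [MultilinearMap.domDomCongr_apply, prodML, MultilinearMap.coe_mk,
    Units.smul_def, zsmul_eq_mul, idx1, idx2]
  ring

/-- Lemma 1: let `M` be a `(2n+1)`-dimensional principal S¹-bundle over a base
`B` with connection form `α`, and let `ωᵢ = π*(ηᵢ) + π*(φᵢ)·α`,
`i = 1,…,p+1`, be invariant 1-forms generating a contact p-sphere on `M`.
Then for any normalized coefficients `(λ₁,…,λ_{p+1})`, the function `Σλᵢφᵢ`
and the 1-form `Σλᵢ dφᵢ` do not vanish simultaneously at any point of `B`. -/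
theorem stmt14 (n p : ℕ)
    (η : Fin (p + 1) → (Fin (2 * n) → ℝ) → (Fin (2 * n) → ℝ) →L[ℝ] ℝ)
    (φ : Fin (p + 1) → (Fin (2 * n) → ℝ) → ℝ)
    (a : (Fin (2 * n) → ℝ) → (Fin (2 * n) → ℝ) →L[ℝ] ℝ)
    (hη : ∀ i, ContDiff ℝ (⊤ : ℕ∞) (η i)) (hφ : ∀ i, ContDiff ℝ (⊤ : ℕ∞) (φ i))
    (ha : ContDiff ℝ (⊤ : ℕ∞) a)
    (hsphere : ∀ l : Fin (p + 1) → ℝ, ∑ i, l i ^ 2 = 1 →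
      ∀ q : (Fin (2 * n) → ℝ) × ℝ,
        ∃ v : Fin (2 * n + 1) → (Fin (2 * n) → ℝ) × ℝ,
          wedgeEval n (fun w => ∑ i, l i * invForm (η i) (φ i) a q w)
            (extd (fun y w => ∑ i, l i * invForm (η i) (φ i) a y w) q) v ≠ 0) :
    ∀ l : Fin (p + 1) → ℝ, ∑ i, l i ^ 2 = 1 → ∀ x : Fin (2 * n) → ℝ,
      ¬ ((∑ i, l i * φ i x) = 0 ∧ (∑ i, l i • fderiv ℝ (φ i) x) = 0) := by
  intro l hl x hx
  obtain ⟨h1, h2⟩ := hx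
  obtain ⟨v, hv⟩ := hsphere l hl (x, 0)
  apply hv
  set q : EE n × ℝ := (x, 0) with hq
  set A : EE n →L[ℝ] ℝ := ∑ i, l i • η i x with hA
  set Bη : EE n →L[ℝ] EE n →L[ℝ] ℝ := ∑ i, l i • fderiv ℝ (η i) x with hBη
  set Bb : EE n →L[ℝ] EE n →L[ℝ] ℝ := Bη - Bη.flip with hBb
  -- the 1-form pulls back
  have haux : ∀ w : EE n × ℝ, (∑ i, l i * invForm (η i) (φ i) a q w) = A w.1 := by
    intro w
    have : (∑ i, l i * invForm (η i) (φ i) a q w)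
        = (∑ i, l i * η i x w.1) + (∑ i, l i * φ i x) * (w.2 + a x w.1) := by
      rw [Finset.sum_mul, ← Finset.sum_add_distrib]
      refine Finset.sum_congr rfl fun i _ => ?_
      simp only [invForm]
      ring
    rw [this, h1, zero_mul, add_zero, hA]
    simp [ContinuousLinearMap.sum_apply, ContinuousLinearMap.smul_apply, smul_eq_mul]
  -- the derivative of the 1-form
  have hfd : ∀ w u : EE n × ℝ,
      fderiv ℝ (fun y => ∑ i, l i * invForm (η i) (φ i) a y w) q u
        = ∑ i, l i * ((fderiv ℝ (η i) x u.1) w.1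
            + (fderiv ℝ (φ i) x u.1) * (w.2 + a x w.1)
            + φ i x * ((fderiv ℝ a x u.1) w.1)) := by
    intro w u
    have hfst : HasFDerivAt (fun y : EE n × ℝ => y.1)
        (ContinuousLinearMap.fst ℝ (EE n) ℝ) q := hasFDerivAt_fst
    set fst := ContinuousLinearMap.fst ℝ (EE n) ℝ with hfstdef
    set D : Fin (p + 1) → (EE n × ℝ) →L[ℝ] ℝ := fun i =>
      l i • (((η i x).comp (0 : (EE n × ℝ) →L[ℝ] EE n)
            + ((fderiv ℝ (η i) x).comp fst).flip w.1)
          + ((φ i x) • ((a x).comp (0 : (EE n × ℝ) →L[ℝ] EE n)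
                + ((fderiv ℝ a x).comp fst).flip w.1)
            + (w.2 + a x w.1) • ((fderiv ℝ (φ i) x).comp fst))) with hD
    have hS : HasFDerivAt (fun y : EE n × ℝ => ∑ i, l i * invForm (η i) (φ i) a y w)
        (∑ i, D i) q := by
      refine HasFDerivAt.fun_sum fun i _ => ?_
      have hηi : HasFDerivAt (fun y : EE n × ℝ => η i y.1)
          ((fderiv ℝ (η i) x).comp fst) q :=
        (((hη i).differentiable (by simp) x).hasFDerivAt).comp q hfst
      have hφi : HasFDerivAt (fun y : EE n × ℝ => φ i y.1)
          ((fderiv ℝ (φ i) x).comp fst) q :=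
        (((hφ i).differentiable (by simp) x).hasFDerivAt).comp q hfst
      have hai : HasFDerivAt (fun y : EE n × ℝ => a y.1)
          ((fderiv ℝ a x).comp fst) q :=
        ((ha.differentiable (by simp) x).hasFDerivAt).comp q hfst
      have hη' := hηi.clm_apply (hasFDerivAt_const w.1 q)
      have ha' := hai.clm_apply (hasFDerivAt_const w.1 q)
      have ha'' := ha'.const_add w.2
      have hmul := hφi.mul ha''
      exact (hη'.add hmul).const_mul (l i)
    rw [hS.fderiv]
    simp only [hD, hfstdef, ContinuousLinearMap.sum_apply, ContinuousLinearMap.smul_apply,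
      ContinuousLinearMap.add_apply, ContinuousLinearMap.comp_apply,
      ContinuousLinearMap.flip_apply, ContinuousLinearMap.zero_apply,
      ContinuousLinearMap.coe_fst', smul_eq_mul, map_zero]
    refine Finset.sum_congr rfl fun i _ => ?_
    ring
  have hb : ∀ u w : EE n × ℝ,
      extd (fun y w => ∑ i, l i * invForm (η i) (φ i) a y w) q u w = Bb u.1 w.1 := by
    intro u w
    rw [extd, hfd w u, hfd u w]
    have key : ∀ z z' : EE n × ℝ,
        (∑ i, l i * ((fderiv ℝ (η i) x z.1) z'.1
            + (fderiv ℝ (φ i) x z.1) * (z'.2 + a x z'.1)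
            + φ i x * ((fderiv ℝ a x z.1) z'.1)))
          = Bη z.1 z'.1 := by
      intro z z'
      have e1 : (∑ i, l i * ((fderiv ℝ (η i) x z.1) z'.1
            + (fderiv ℝ (φ i) x z.1) * (z'.2 + a x z'.1)
            + φ i x * ((fderiv ℝ a x z.1) z'.1)))
          = (∑ i, l i * (fderiv ℝ (η i) x z.1) z'.1)
            + (∑ i, l i * (fderiv ℝ (φ i) x z.1)) * (z'.2 + a x z'.1)
            + (∑ i, l i * φ i x) * ((fderiv ℝ a x z.1) z'.1) := by
        rw [Finset.sum_mul, Finset.sum_mul, ← Finset.sum_add_distrib,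
          ← Finset.sum_add_distrib]
        refine Finset.sum_congr rfl fun i _ => ?_
        ring
      have e2 : (∑ i, l i * (fderiv ℝ (φ i) x z.1)) = 0 := by
        have := congrArg (fun (T : EE n →L[ℝ] ℝ) => T z.1) h2
        simpa [ContinuousLinearMap.sum_apply, ContinuousLinearMap.smul_apply,
          smul_eq_mul] using this
      rw [e1, e2, h1, zero_mul, zero_mul, add_zero, add_zero, hBη]
      simp [ContinuousLinearMap.sum_apply, ContinuousLinearMap.smul_apply, smul_eq_mul]
    rw [key u w, key w u, hBb]
    simp [ContinuousLinearMap.sub_apply, ContinuousLinearMap.flip_apply]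
  have ea : (fun w => ∑ i, l i * invForm (η i) (φ i) a q w)
      = fun w : EE n × ℝ => A w.1 := funext haux
  have eb : extd (fun y w => ∑ i, l i * invForm (η i) (φ i) a y w) q
      = fun u w : EE n × ℝ => Bb u.1 w.1 := funext fun u => funext fun w => hb u w
  rw [ea, eb]
  exact wedgeEval_pullback_eq_zero n A Bb v

end
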